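/- For every integer m ≥ 1, ψ(4m−1) = ψ(4m+1). -/

import Mathlib

/-! Writing `x = m₂(j) + 2·m₂(j')` interleaves the binary digits of `j` and `j'`, so this is a
bijection `ℕ × ℕ → ℕ`, strictly increasing in each argument. Since
`s_{j+1} + 2·s_{j'+1} = 2x + 3`, the numbers below `2x + 3` collinear to it are those coming from
`(j, b)` with `b < j'` or from `(a, j')` with `a < j`; hence `ψ(2x + 3) = x + 1 - (j + j')`.
For `x = 2m - 2` the index `j` is even, so `x + 1` comes from `(j + 1, j')`, and both sides of
the theorem equal `2m - 1 - j - j'`. -/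

/-- Moser function `m_r(n)`: reinterpret the base-`r` digits of `n` as base-`r²` digits,
i.e. `m_r(n) = Σ_i ν_i r^(2i)` where `n = Σ_i ν_i r^i` is the base-`r` expansion. -/
def moser (r n : ℕ) : ℕ := Nat.ofDigits (r ^ 2) (Nat.digits r n)

/-- `s^(r)_n = r · m_r(n−1) + 1` for `n ≥ 1`. -/
def moserS (r n : ℕ) : ℕ := r * moser r (n - 1) + 1

/-- The `i`-th base-`r` digit of `n` (0 if beyond the expansion). -/
def dig (r n i : ℕ) : ℕ := (Nat.digits r n).getD i 0

/-- Josephus–Groër survivor function: with `M = N` if `N` is odd, `M = N − 1` otherwise,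
and `M = Σ_j b_j 2^j` the binary expansion, `W(N) = 1 + Σ_{j odd} b_j 2^j`. -/
def W (N : ℕ) : ℕ :=
  let M := if N % 2 = 1 then N else N - 1
  1 + ((((List.range (Nat.digits 2 M).length).zip (Nat.digits 2 M)).filter (fun p => p.1 % 2 = 1)).map (fun p => p.2 * 2 ^ p.1)).sum

/-- Two integers `M, N > 1` are collinear if in their (unique) decompositions
`· = s^(2)_k + 2·s^(2)_l` (with `k, l ≥ 1`) they share the first or the second index;
`1` is collinear to nothing. -/
def MoserCollinear (M N : ℕ) : Prop :=
  1 < M ∧ 1 < N ∧ ∃ k l k' l' : ℕ, 1 ≤ k ∧ 1 ≤ l ∧ 1 ≤ k' ∧ 1 ≤ l' ∧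
    M = moserS 2 k + 2 * moserS 2 l ∧ N = moserS 2 k' + 2 * moserS 2 l' ∧
    (k = k' ∨ l = l')

open scoped Classical in
/-- `ψ(n)` counts the odd integers `i` with `1 ≤ i < n` that are not collinear to `n`. -/
noncomputable def psi (n : ℕ) : ℕ :=
  ((Finset.Ico 1 n).filter (fun i => Odd i ∧ ¬ MoserCollinear i n)).card

open Finset

theorem moser_eq_mod_add_moser_div {r : ℕ} (hr : 1 < r) (n : ℕ) :
    moser r n = n % r + r ^ 2 * moser r (n / r) := by
  rcases Nat.eq_zero_or_pos n with rfl | hn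
  · simp [moser]
  · rw [moser, Nat.digits_def' hr hn, Nat.ofDigits_cons, moser]

theorem moser_lt_moser_succ {r : ℕ} (hr : 1 < r) (n : ℕ) : moser r n < moser r (n + 1) := by
  induction n using Nat.strong_induction_on with
  | _ n ih =>
    rw [moser_eq_mod_add_moser_div hr n, moser_eq_mod_add_moser_div hr (n + 1)]
    have hmod := Nat.mod_lt n (by omega : 0 < r)
    by_cases hdvd : r ∣ n + 1
    · have hn : n ≠ 0 := by
        rintro rfl
        exact absurd (Nat.le_of_dvd one_pos hdvd) (by omega)
      have hlt := ih (n / r) (Nat.div_lt_self (Nat.pos_of_ne_zero hn) hr)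
      rw [Nat.succ_div_of_dvd hdvd, Nat.mod_eq_zero_of_dvd hdvd]
      nlinarith
    · have hdiv := Nat.succ_div_of_not_dvd hdvd
      have h1 := Nat.mod_add_div n r
      have h2 := Nat.mod_add_div (n + 1) r
      rw [hdiv] at h2 ⊢
      omega

theorem moser_strictMono {r : ℕ} (hr : 1 < r) : StrictMono (moser r) :=
  strictMono_nat_of_lt_succ (moser_lt_moser_succ hr)

/-- Interleaves the binary digits of `a` (even positions) with those of `b` (odd positions). -/
def moserPair (a b : ℕ) : ℕ := moser 2 a + 2 * moser 2 b

theorem moserPair_eq (a b : ℕ) :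
    moserPair a b = a % 2 + 2 * (b % 2) + 4 * moserPair (a / 2) (b / 2) := by
  rw [moserPair, moserPair, moser_eq_mod_add_moser_div one_lt_two a,
    moser_eq_mod_add_moser_div one_lt_two b]
  ring

theorem moserPair_strictMono_left (b : ℕ) : StrictMono (moserPair · b) :=
  fun _ _ h => by simpa [moserPair] using moser_strictMono one_lt_two h

theorem moserPair_strictMono_right (a : ℕ) : StrictMono (moserPair a) :=
  fun _ _ h => by simpa [moserPair] using moser_strictMono one_lt_two h

theorem moserPair_inj {a b c d : ℕ} : moserPair a b = moserPair c d ↔ a = c ∧ b = d := by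
  refine ⟨fun h => ?_, fun ⟨hac, hbd⟩ => hac ▸ hbd ▸ rfl⟩
  induction hn : moserPair a b using Nat.strong_induction_on generalizing a b c d with
  | _ n ih =>
    rcases Nat.eq_zero_or_pos n with rfl | hpos
    · have := (moser_strictMono one_lt_two).le_apply (x := a)
      have := (moser_strictMono one_lt_two).le_apply (x := b)
      have := (moser_strictMono one_lt_two).le_apply (x := c)
      have := (moser_strictMono one_lt_two).le_apply (x := d)
      simp only [moserPair] at h hn
      omega
    · rw [moserPair_eq a b] at h hn
      rw [moserPair_eq c d] at h
      have := ih (n / 4) (by omega) (a := a / 2) (b := b / 2) (c := c / 2) (d := d / 2)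
        (by omega) (by omega)
      omega

theorem exists_moserPair_eq (n : ℕ) : ∃ a b, moserPair a b = n := by
  induction n using Nat.strong_induction_on with
  | _ n ih =>
    rcases Nat.eq_zero_or_pos n with rfl | hpos
    · exact ⟨0, 0, by simp [moserPair, moser]⟩
    · obtain ⟨a, b, hab⟩ := ih (n / 4) (by omega)
      refine ⟨n % 2 + 2 * a, n / 2 % 2 + 2 * b, ?_⟩
      rw [moserPair_eq]
      have ha : (n % 2 + 2 * a) / 2 = a := by omega
      have hb : (n / 2 % 2 + 2 * b) / 2 = b := by omega
      rw [ha, hb, hab]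
      omega

theorem moserS_two_add_two_mul_moserS_two (a b : ℕ) :
    moserS 2 (a + 1) + 2 * moserS 2 (b + 1) = 2 * moserPair a b + 3 := by
  simp only [moserS, moserPair, Nat.add_sub_cancel]
  ring

theorem moserCollinear_iff {i j j' : ℕ} :
    MoserCollinear i (2 * moserPair j j' + 3) ↔
      ∃ a b, i = 2 * moserPair a b + 3 ∧ (a = j ∨ b = j') := by
  constructor
  · rintro ⟨-, -, k, l, k', l', hk, hl, hk', hl', rfl, hN, hkl⟩
    obtain ⟨a, rfl⟩ := Nat.exists_eq_add_of_le' hk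
    obtain ⟨b, rfl⟩ := Nat.exists_eq_add_of_le' hl
    obtain ⟨c, rfl⟩ := Nat.exists_eq_add_of_le' hk'
    obtain ⟨d, rfl⟩ := Nat.exists_eq_add_of_le' hl'
    rw [moserS_two_add_two_mul_moserS_two] at hN
    obtain ⟨rfl, rfl⟩ := moserPair_inj.1 (by omega : moserPair j j' = moserPair c d)
    exact ⟨a, b, moserS_two_add_two_mul_moserS_two a b, by omega⟩
  · rintro ⟨a, b, rfl, hab⟩
    exact ⟨by omega, by omega, a + 1, b + 1, j + 1, j' + 1, by omega, by omega, by omega,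
      by omega, (moserS_two_add_two_mul_moserS_two a b).symm,
      (moserS_two_add_two_mul_moserS_two j j').symm, by omega⟩

open scoped Classical in
theorem filter_moserCollinear_eq (j j' : ℕ) :
    {i ∈ Ico 1 (2 * moserPair j j' + 3) | MoserCollinear i (2 * moserPair j j' + 3)} =
      (range j').image (fun b => 2 * moserPair j b + 3) ∪
        (range j).image (fun a => 2 * moserPair a j' + 3) := by
  ext i
  simp only [mem_filter, mem_Ico, mem_union, mem_image,
    mem_range, moserCollinear_iff]
  constructor
  · rintro ⟨⟨-, hi⟩, a, b, rfl, rfl | rfl⟩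
    · exact Or.inl ⟨b, (moserPair_strictMono_right a).lt_iff_lt.1 (by omega), rfl⟩
    · exact Or.inr ⟨a, (moserPair_strictMono_left b).lt_iff_lt.1 (by omega), rfl⟩
  · rintro (⟨b, hb, rfl⟩ | ⟨a, ha, rfl⟩)
    · have : moserPair j b < moserPair j j' := moserPair_strictMono_right j hb
      exact ⟨⟨by omega, by omega⟩, j, b, rfl, Or.inl rfl⟩
    · have : moserPair a j' < moserPair j j' := moserPair_strictMono_left j' ha
      exact ⟨⟨by omega, by omega⟩, a, j', rfl, Or.inr rfl⟩

open scoped Classical in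
theorem card_filter_moserCollinear (j j' : ℕ) :
    #{i ∈ Ico 1 (2 * moserPair j j' + 3) | MoserCollinear i (2 * moserPair j j' + 3)} =
      j + j' := by
  have hdisj : Disjoint ((range j').image (fun b => 2 * moserPair j b + 3))
      ((range j).image (fun a => 2 * moserPair a j' + 3)) := by
    simp only [disjoint_left, mem_image, mem_range]
    rintro _ ⟨b, hb, rfl⟩ ⟨a, ha, hab⟩
    have := moserPair_inj.1 (by omega : moserPair a j' = moserPair j b)
    omega
  rw [filter_moserCollinear_eq, card_union_of_disjoint hdisj,
    card_image_of_injective _ fun b c h => (moserPair_strictMono_right j).injective (by omega),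
    card_image_of_injective _ fun a c h => (moserPair_strictMono_left j').injective (by omega),
    card_range, card_range, add_comm]

theorem card_filter_odd_Ico_one (n : ℕ) : #{i ∈ Ico 1 (2 * n + 1) | Odd i} = n := by
  have : {i ∈ Ico 1 (2 * n + 1) | Odd i} = (range n).image (2 * · + 1) := by
    ext i
    simp only [mem_filter, mem_Ico, mem_image, mem_range, Nat.odd_iff]
    exact ⟨fun h => ⟨i / 2, by omega, by omega⟩, by rintro ⟨t, ht, rfl⟩; omega⟩
  rw [this, card_image_of_injective _ fun a b h => by omega, card_range]

theorem psi_two_mul_moserPair_add_three (j j' : ℕ) :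
    psi (2 * moserPair j j' + 3) = moserPair j j' + 1 - (j + j') := by
  classical
  have hsub : {i ∈ Ico 1 (2 * moserPair j j' + 3) |
      MoserCollinear i (2 * moserPair j j' + 3)} ⊆
        {i ∈ Ico 1 (2 * moserPair j j' + 3) | Odd i} := by
    refine monotone_filter_right _ fun i _ hi => ?_
    obtain ⟨a, b, rfl, -⟩ := moserCollinear_iff.1 hi
    exact ⟨moserPair a b + 1, by ring⟩
  rw [psi, filter_and_not, card_sdiff_of_subset hsub, card_filter_moserCollinear,
    show 2 * moserPair j j' + 3 = 2 * (moserPair j j' + 1) + 1 by ring, card_filter_odd_Ico_one]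

/-- For every `m ≥ 1`, `ψ(4m−1) = ψ(4m+1)`. -/
theorem psi_eq (m : ℕ) (hm : 1 ≤ m) : psi (4 * m - 1) = psi (4 * m + 1) := by
  obtain ⟨j, j', hjj'⟩ := exists_moserPair_eq (2 * m - 2)
  have hj : j % 2 = 0 := by
    have := moserPair_eq j j'
    omega
  have hsucc : moserPair (j + 1) j' = 2 * m - 1 := by
    have := moserPair_eq j j'
    rw [moserPair_eq, (by omega : (j + 1) / 2 = j / 2)]
    omega
  rw [show 4 * m - 1 = 2 * moserPair j j' + 3 by omega,
    show 4 * m + 1 = 2 * moserPair (j + 1) j' + 3 by omega,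
    psi_two_mul_moserPair_add_three, psi_two_mul_moserPair_add_three]
  omega
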